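/- arXiv:1002.2586 — 2 statements merged into one kernel-verified Lean document; each statement's English description precedes it below -/
import Mathlib

section
/- Let D = [D₁,…,D_L] ∈ ℝ^{n×nL} be a union of L orthogonal bases with σ(D) = n+1. Then any set of n pairwise orthogonal columns of D is necessarily contained entirely in a single block D_i of D. -/
open Matrix

open Classical in
/-- The spark of a matrix: the smallest number of columns that form a linearly
dependent set; with the convention that it is the number of columns plus one if
all sets of columns are linearly independent. -/
noncomputable def Matrix.spark {α β : Type*} [Fintype α] [Fintype β] (D : Matrix α β ℝ) : ℕ :=
  if ∃ s : Finset β, ¬ LinearIndependent ℝ (fun j : s => fun i => D i j.val) then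
    sInf {k | ∃ s : Finset β, s.card = k ∧ ¬ LinearIndependent ℝ (fun j : s => fun i => D i j.val)}
  else Fintype.card β + 1

/-- The `n × nL` matrix `D = [D₁, …, D_L]` obtained by horizontally concatenating
the `n × n` blocks `Db l`. -/
def unionOfBases {n L : ℕ} (Db : Fin L → Matrix (Fin n) (Fin n) ℝ) :
    Matrix (Fin n) (Fin L × Fin n) ℝ :=
  Matrix.of fun i p => Db p.1 i p.2

/-! If `Γ` met two blocks, let `l` be a block it meets; as `Γ` also has a column outside
block `l`, some column `c` of block `l` is not in `Γ`. The `n` orthonormal columns of `Γ`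
form an orthonormal basis of `ℝⁿ`, and `c` is orthogonal to the columns of `Γ` in block `l`,
so `c` lies in the span of the fewer than `n` columns of `Γ` outside block `l`. Together with
`c` these are at most `n` linearly dependent columns, contradicting `σ(D) = n + 1`. -/

namespace Matrix

section Orthonormal

variable {ι m β R : Type*} [Fintype ι] [Fintype m] [DecidableEq ι] [DecidableEq m] [CommRing R]

theorem sum_dotProduct_smul_of_orthonormal (v : ι → m → R)
    (hv : ∀ i j, v i ⬝ᵥ v j = if i = j then 1 else 0)
    (hcard : Fintype.card ι = Fintype.card m) (x : m → R) :
    ∑ i, (v i ⬝ᵥ x) • v i = x := by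
  set A : Matrix ι m R := of v
  have hAAt : A * Aᵀ = 1 := Matrix.ext hv
  have hAtA : Aᵀ * A = 1 := (mul_eq_one_comm_of_card_eq _ _ _ hcard).mp hAAt
  calc ∑ i, (v i ⬝ᵥ x) • v i = Aᵀ *ᵥ (A *ᵥ x) := by
        rw [mulVec_transpose, vecMul_eq_sum]
        rfl
    _ = x := by rw [mulVec_mulVec, hAtA, one_mulVec]

theorem mem_span_image_of_forall_dotProduct_eq_zero [DecidableEq β] (v : β → m → R)
    {Γ : Finset β} (hv : ∀ i ∈ Γ, ∀ j ∈ Γ, v i ⬝ᵥ v j = if i = j then 1 else 0)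
    (hcard : Γ.card = Fintype.card m) {s : Set β} {x : m → R}
    (hx : ∀ i ∈ Γ, i ∉ s → v i ⬝ᵥ x = 0) :
    x ∈ Submodule.span R (v '' s) := by
  have hΓ : ∀ i j : Γ, v i ⬝ᵥ v j = if i = j then 1 else 0 := fun i j => by
    simp only [hv i i.2 j j.2, Subtype.ext_iff]
  rw [← sum_dotProduct_smul_of_orthonormal (fun i : Γ => v i) hΓ (by simpa using hcard) x]
  refine Submodule.sum_mem _ fun i _ => ?_
  by_cases hi : (i : β) ∈ s
  · exact Submodule.smul_mem _ _ (Submodule.subset_span ⟨i, hi, rfl⟩)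
  · simp [hx i i.2 hi]

end Orthonormal

theorem linearIndepOn_transpose_of_card_lt_spark {α β : Type*} [Fintype α] [Fintype β]
    (D : Matrix α β ℝ) {s : Finset β} (hs : s.card < D.spark) :
    LinearIndepOn ℝ (fun j => Dᵀ j) (s : Set β) := by
  by_contra hdep
  have : D.spark ≤ s.card := by
    rw [spark, if_pos ⟨s, hdep⟩]
    exact Nat.sInf_le ⟨s, rfl, hdep⟩
  omega

end Matrix

theorem unionOfBases_transpose_dotProduct_of_same_block {n L : ℕ}
    {Db : Fin L → Matrix (Fin n) (Fin n) ℝ}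
    (hD : ∀ l, (Db l)ᵀ * Db l = 1) (l : Fin L) (a b : Fin n) :
    (unionOfBases Db)ᵀ (l, a) ⬝ᵥ (unionOfBases Db)ᵀ (l, b) = if a = b then 1 else 0 :=
  congrFun₂ (hD l) a b

theorem Finset.exists_mk_notMem_of_card_le {α β : Type*} [Fintype β] {Γ : Finset (α × β)}
    (hcard : Γ.card ≤ Fintype.card β) {q : α × β} (hq : q ∈ Γ) {a : α}
    (hqa : q.1 ≠ a) :
    ∃ b, (a, b) ∉ Γ := by
  classical
  by_contra! hfiber
  have hsub : univ.image (Prod.mk a) ⊂ Γ :=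
    (ssubset_iff_of_subset (by simpa [subset_iff] using hfiber)).mpr
      ⟨q, hq, by simpa [Prod.ext_iff] using hqa.symm⟩
  have := card_lt_card hsub
  rw [card_image_of_injective _ (Prod.mk_right_injective a), card_univ] at this
  omega

/-- If `D = [D₁, …, D_L]` is a union of `L` orthogonal bases with `σ(D) = n + 1`,
then any set of `n` pairwise orthogonal columns of `D` is contained entirely in a
single block of `D`. -/
theorem orthogonal_columns_in_single_block {n L : ℕ} (hL : 0 < L)
    (Db : Fin L → Matrix (Fin n) (Fin n) ℝ)
    (hD : ∀ l, (Db l)ᵀ * Db l = 1)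
    (hspark : (unionOfBases Db).spark = n + 1)
    (Γ : Finset (Fin L × Fin n)) (hcard : Γ.card = n)
    (horth : ∀ p ∈ Γ, ∀ q ∈ Γ, p ≠ q →
      ∑ x : Fin n, unionOfBases Db x p * unionOfBases Db x q = 0) :
    ∃ l : Fin L, ∀ p ∈ Γ, p.1 = l := by
  obtain rfl | ⟨p₀, hp₀⟩ := Γ.eq_empty_or_nonempty
  · exact ⟨⟨0, hL⟩, by simp⟩
  by_contra! hsplit
  obtain ⟨q, hq, hql⟩ := hsplit p₀.1
  set l := p₀.1
  set col : Fin L × Fin n → Fin n → ℝ := fun p => (unionOfBases Db)ᵀ p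
  obtain ⟨j, hj⟩ := Finset.exists_mk_notMem_of_card_le (by simp [hcard]) hq hql
  set T := Γ.filter (·.1 ≠ l)
  have hΓ : ∀ p ∈ Γ, ∀ q ∈ Γ, col p ⬝ᵥ col q = if p = q then 1 else 0 := by
    intro p hp q hq
    split_ifs with hpq
    · simpa [hpq] using unionOfBases_transpose_dotProduct_of_same_block hD q.1 q.2 q.2
    · exact horth p hp q hq hpq
  have hspan : col (l, j) ∈ Submodule.span ℝ (col '' T) := by
    refine mem_span_image_of_forall_dotProduct_eq_zero col hΓ (by simp [hcard])
      fun p hp hpT => ?_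
    obtain ⟨l', i⟩ := p
    have hl' : l' = l := by simpa [T, hp] using hpT
    have hij : i ≠ j := by rintro rfl; exact hj (hl' ▸ hp)
    simpa [hl', hij] using unionOfBases_transpose_dotProduct_of_same_block hD l i j
  have hjT : (l, j) ∉ T := fun h => hj (Finset.mem_filter.mp h).1
  have hT : T.card < n := calc
    T.card < Γ.card :=
      Finset.card_lt_card (Finset.filter_ssubset.mpr ⟨p₀, hp₀, not_not.mpr rfl⟩)
    _ = n := hcard
  have hindep := linearIndepOn_transpose_of_card_lt_spark (unionOfBases Db)
    (s := insert (l, j) T) (by rw [hspark, Finset.card_insert_of_notMem hjT]; omega)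
  rw [Finset.coe_insert, linearIndepOn_insert (by simpa using hjT)] at hindep
  exact hindep.2 hspan
end

section
/- Let D = [D₁,…,D_L] ∈ ℝ^{n×nL} be a union of L orthonormal bases with σ(D) = n+1, and let Q be an nL×nL permutation matrix such that D̂ = DQ is also a union of L orthonormal bases. Then Q is a block permutation: there is a permutation τ of {1,…,L} such that Q maps the set of columns constituting block i of D onto the set of columns constituting block τ(i) of D̂, for every i (i.e., Q does not mix columns from different blocks). -/
/-!
Write `D̂ = D Q`, so that column `q` of `D̂` is column `g q` of `D` for a permutation `g`. Fix a
block `l` of `D̂` and one of its columns, equal to column `(i, b₀)` of `D`. If some column `(i, b)`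
of `D` were missing from block `l` of `D̂`, then it and the other `n - 1` columns of that block
would be `n` distinct columns of `D`, all orthogonal to the nonzero column `(i, b₀)`. They would
lie in an `(n - 1)`-dimensional subspace, hence be dependent, contradicting `σ(D) = n + 1`. So
every block of `D̂` contains, and by counting equals, a whole block of `D`.
-/

open Matrix

/-- The `l`-th `n × n` block of an `n × nL` matrix. -/
def blockOf {n L : ℕ} (M : Matrix (Fin n) (Fin L × Fin n) ℝ) (l : Fin L) :
    Matrix (Fin n) (Fin n) ℝ :=
  Matrix.of fun i j => M i (l, j)

/-- A permutation matrix: a 0–1 matrix with exactly one entry equal to `1` in each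
row and each column. -/
def IsPermMatrix {ι : Type*} [Fintype ι] (Q : Matrix ι ι ℝ) : Prop :=
  (∀ i j, Q i j = 0 ∨ Q i j = 1) ∧
  (∀ i, ∃! j, Q i j = 1) ∧ (∀ j, ∃! i, Q i j = 1)

theorem IsPermMatrix.exists_eq_permMatrix {ι : Type*} [Fintype ι] [DecidableEq ι]
    {Q : Matrix ι ι ℝ} (hQ : IsPermMatrix Q) : ∃ π : Equiv.Perm ι, Q = π.permMatrix ℝ := by
  obtain ⟨h01, hrow, hcol⟩ := hQ
  choose f hf using hrow
  have hf_inj : Function.Injective f := fun i i' h =>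
    (hcol (f i)).unique (hf i).1 (h ▸ (hf i').1)
  refine ⟨Equiv.ofBijective f (Finite.injective_iff_bijective.mp hf_inj), ?_⟩
  ext i j
  simp only [Equiv.Perm.permMatrix, PEquiv.toMatrix_apply, Equiv.toPEquiv_apply, Option.mem_def,
    Option.some.injEq, Equiv.ofBijective_apply]
  by_cases hj : f i = j
  · simp [← hj, (hf i).1]
  · rcases h01 i j with h | h
    · simp [hj, h]
    · exact absurd ((hf i).2 j h).symm hj

theorem Matrix.not_linearIndependent_of_forall_dotProduct_eq_zero {R κ m : Type*} [Field R]
    [LinearOrder R] [IsStrictOrderedRing R] [Fintype κ] [Fintype m] {w : κ → m → R}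
    (hcard : Fintype.card κ = Fintype.card m) {v : m → R} (hv : v ≠ 0)
    (hw : ∀ k, w k ⬝ᵥ v = 0) : ¬ LinearIndependent R w := by
  intro hli
  have hspan := hli.span_eq_top_of_card_eq_finrank' (by rwa [Module.finrank_fintype_fun_eq_card])
  obtain ⟨c, hc⟩ := (Submodule.mem_span_range_iff_exists_fun R).mp (hspan ▸ Submodule.mem_top)
  apply hv
  rw [← dotProduct_self_eq_zero]
  calc v ⬝ᵥ v = (∑ k, c k • w k) ⬝ᵥ v := by rw [hc]
    _ = ∑ k, c k * (w k ⬝ᵥ v) := by simp only [sum_dotProduct, smul_dotProduct, smul_eq_mul]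
    _ = 0 := by simp [hw]

namespace Matrix

variable {m ι : Type*} [Fintype m] [Fintype ι]

theorem spark_le_card_of_not_linearIndependent (D : Matrix m ι ℝ) (s : Finset ι)
    (h : ¬ LinearIndependent ℝ (fun j : s => Dᵀ j)) : D.spark ≤ s.card := by
  rw [spark, if_pos ⟨s, h⟩]
  exact Nat.sInf_le ⟨s, rfl, h⟩

theorem exists_dotProduct_ne_zero_of_card_lt_spark {D : Matrix m ι ℝ}
    (hD : Fintype.card m < D.spark) {s : Finset ι} (hs : s.card = Fintype.card m)
    {v : m → ℝ} (hv : v ≠ 0) : ∃ j ∈ s, Dᵀ j ⬝ᵥ v ≠ 0 := by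
  by_contra! h
  have := D.spark_le_card_of_not_linearIndependent s
    (not_linearIndependent_of_forall_dotProduct_eq_zero (by simpa using hs) hv fun j => h j j.2)
  omega

end Matrix

theorem dotProduct_transpose_of_blockOf_orthonormal {n L : ℕ}
    {M : Matrix (Fin n) (Fin L × Fin n) ℝ} {l : Fin L} (h : (blockOf M l)ᵀ * blockOf M l = 1)
    (j j' : Fin n) :
    Mᵀ (l, j) ⬝ᵥ Mᵀ (l, j') = if j = j' then 1 else 0 := by
  have := congrFun₂ h j j'
  rwa [mul_apply', one_apply] at this

theorem exists_apply_eq_mk_of_lt_spark {n L : ℕ} {D : Matrix (Fin n) (Fin L × Fin n) ℝ}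
    (π : Equiv.Perm (Fin L × Fin n)) (hD : ∀ l, (blockOf D l)ᵀ * blockOf D l = 1)
    (hDπ : ∀ l, (blockOf (D.submatrix id π) l)ᵀ * blockOf (D.submatrix id π) l = 1)
    (hspark : n < D.spark) (l : Fin L) (j b : Fin n) : ∃ j', π (l, j') = ((π (l, j)).1, b) := by
  by_contra! hnot
  set c := π (l, j)
  set s := insert (c.1, b) ((Finset.univ.erase j).image fun j' => π (l, j'))
  have hcard : s.card = Fintype.card (Fin n) := by
    rw [Finset.card_insert_of_notMem (by simpa using fun j' _ => hnot j'),
      Finset.card_image_of_injective _ fun _ _ h => (Prod.mk.inj (π.injective h)).2,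
      Finset.card_erase_add_one (Finset.mem_univ j), Finset.card_univ]
  have hv : Dᵀ c ≠ 0 := by
    intro h0
    simpa [h0] using dotProduct_transpose_of_blockOf_orthonormal (hD c.1) c.2 c.2
  obtain ⟨x, hx, hne⟩ := Matrix.exists_dotProduct_ne_zero_of_card_lt_spark (by simpa) hcard hv
  rcases Finset.mem_insert.mp hx with rfl | hx
  · have hb : b ≠ c.2 := fun h => hnot j (by simp [c, h])
    have := dotProduct_transpose_of_blockOf_orthonormal (hD c.1) b c.2
    rw [if_neg hb] at this
    exact hne this
  · obtain ⟨j', hj', rfl⟩ := Finset.mem_image.mp hx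
    have := dotProduct_transpose_of_blockOf_orthonormal (hDπ l) j' j
    rw [if_neg (Finset.mem_erase.mp hj').1] at this
    exact hne this

namespace Equiv.Perm

variable {α β : Type*}

theorem fst_apply_mk_eq_of_forall_exists [Finite β] {π : Perm (α × β)}
    (h : ∀ l j b, ∃ j', π (l, j') = ((π (l, j)).1, b)) (l : α) (j j' : β) :
    (π (l, j')).1 = (π (l, j)).1 := by
  choose e he using h l j
  have he_inj : Function.Injective e := fun b b' hbb' =>
    congrArg Prod.snd ((he b).symm.trans (hbb' ▸ he b'))
  obtain ⟨b, rfl⟩ := Finite.surjective_of_injective he_inj j'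
  rw [he]

theorem exists_perm_fst_apply_eq [Finite α] [Nonempty β] (π : Perm (α × β))
    (h : ∀ l j j', (π (l, j')).1 = (π (l, j)).1) : ∃ σ : Perm α, ∀ q, (π q).1 = σ q.1 := by
  obtain ⟨b⟩ := ‹Nonempty β›
  let f : α → α := fun l => (π (l, b)).1
  have hf : ∀ q, (π q).1 = f q.1 := fun q => h q.1 b q.2
  have hf_surj : f.Surjective := fun i => ⟨(π.symm (i, b)).1, by rw [← hf]; simp⟩
  exact ⟨Equiv.ofBijective f (Finite.surjective_iff_bijective.mp hf_surj), hf⟩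

end Equiv.Perm

theorem perm_of_unions_is_block_permutation_general {n L : ℕ}
    (Db : Fin L → Matrix (Fin n) (Fin n) ℝ)
    (hD : ∀ l, (Db l)ᵀ * Db l = 1)
    (hspark : (unionOfBases Db).spark = n + 1)
    (Q : Matrix (Fin L × Fin n) (Fin L × Fin n) ℝ)
    (hQ : IsPermMatrix Q)
    (hDhat : ∀ l : Fin L,
      (blockOf (unionOfBases Db * Q) l)ᵀ * blockOf (unionOfBases Db * Q) l = 1) :
    ∃ τ : Equiv.Perm (Fin L), ∀ p q : Fin L × Fin n, Q p q ≠ 0 → q.1 = τ p.1 := by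
  obtain ⟨π, rfl⟩ := hQ.exists_eq_permMatrix
  rcases isEmpty_or_nonempty (Fin n) with _ | _
  · exact ⟨1, fun p => isEmptyElim p.2⟩
  rw [Equiv.Perm.permMatrix, PEquiv.mul_toMatrix_toPEquiv] at hDhat
  have hfiber := exists_apply_eq_mk_of_lt_spark (D := unionOfBases Db) π.symm hD hDhat (by omega)
  obtain ⟨σ, hσ⟩ := Equiv.Perm.exists_perm_fst_apply_eq π.symm
    (Equiv.Perm.fst_apply_mk_eq_of_forall_exists hfiber)
  refine ⟨σ.symm, fun p q hpq => ?_⟩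
  obtain rfl : π p = q := by simpa [PEquiv.toMatrix_apply] using hpq
  rw [Equiv.eq_symm_apply, ← hσ, π.symm_apply_apply]

/-- If `D = [D₁, …, D_L]` is a union of `L` orthonormal bases with `σ(D) = n + 1`
and `Q` is a permutation matrix such that `D̂ = D Q` is also a union of `L`
orthonormal bases, then `Q` does not mix columns from different blocks: there is a
permutation `τ` of the block indices such that the columns of block `i` of `D` are
mapped onto the columns of block `τ(i)` of `D̂`. -/
theorem perm_of_unions_is_block_permutation {n L : ℕ} (hL : 0 < L)
    (Db : Fin L → Matrix (Fin n) (Fin n) ℝ)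
    (hD : ∀ l, (Db l)ᵀ * Db l = 1)
    (hspark : (unionOfBases Db).spark = n + 1)
    (Q : Matrix (Fin L × Fin n) (Fin L × Fin n) ℝ)
    (hQ : IsPermMatrix Q)
    (hDhat : ∀ l : Fin L,
      (blockOf (unionOfBases Db * Q) l)ᵀ * blockOf (unionOfBases Db * Q) l = 1) :
    ∃ τ : Equiv.Perm (Fin L), ∀ p q : Fin L × Fin n, Q p q ≠ 0 → q.1 = τ p.1 :=
  perm_of_unions_is_block_permutation_general Db hD hspark Q hQ hDhat
end
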